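/- arXiv:1903.07255 — 8 statements merged into one kernel-verified Lean document; each statement's English description precedes it below -/
import Mathlib

section
/- Let C be a monoidal category which is a groupoid, and let x be an object equipped with a strongly 2-torsion structure, i.e. an isomorphism e : x ⊗ x ≅ 𝟙 such that (e.hom ⊗ id_x) ≫ λ_x = α_{x,x,x}.hom ≫ (id_x ⊗ e.hom) ≫ ρ_x as morphisms (x ⊗ x) ⊗ x ⟶ x. Then the evaluation morphisms φ^{(d)} are independent of the bracketing, in the following precise sense: for all p, q ∈ ℕ, μ_{p,q}.hom ≫ φ^{(p+q)} = (φ^{(p)} ⊗ φ^{(q)}) ≫ c_{p,q}, where c_{p,q} is e.hom if p and q are both odd, the left unitor λ_x if p is even and q is odd, the right unitor ρ_x if p is odd and q is even, and the unitor λ_𝟙 if p and q are both even. -/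
/-!
Induction on `q`. Splitting off the last factor `x`, the case `q + 1` reduces to the case `q`
and the compatibility of `c` with one evaluation step,
`α⁻¹ ≫ step_{a ⊕ b} (c_{a,b}) = (id ⊗ step_b) ≫ c_{a,¬b}`.
For three of the four parity pairs `(a, b)` this is monoidal coherence; for `a`, `b` both odd
it is exactly the strong 2-torsion condition.
-/

open CategoryTheory MonoidalCategory

namespace StronglyTwoTorsion

variable {C : Type*} [Groupoid C] [MonoidalCategory C]

/-- Left-associated tensor powers: `x^{⊗0} := 𝟙` and `x^{⊗(d+1)} := x^{⊗d} ⊗ x`. -/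
def pow (x : C) : ℕ → C
  | 0 => 𝟙_ C
  | d + 1 => pow x d ⊗ x

/-- The canonical coherence isomorphisms `μ_{p,q} : x^{⊗p} ⊗ x^{⊗q} ≅ x^{⊗(p+q)}`,
defined by `μ_{p,0} := ρ` and `μ_{p,q+1} := α⁻¹ ≫ (μ_{p,q} ⊗ id_x)`. -/
def mu (x : C) : (p q : ℕ) → (pow x p ⊗ pow x q ⟶ pow x (p + q))
  | p, 0 => (ρ_ (pow x p)).hom
  | p, q + 1 => (α_ (pow x p) (pow x q) x).inv ≫ (mu x p q ▷ x)

/-- Parity of a natural number, as a boolean. -/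
def par : ℕ → Bool
  | 0 => false
  | d + 1 => !(par d)

/-- The target of the evaluation morphism `φ^{(d)}`: `x` if `d` is odd, `𝟙` if `d` is even. -/
def tgt (x : C) : Bool → C
  | false => 𝟙_ C
  | true => x

/-- One step of the recursive definition of the evaluation morphisms. -/
def step (x : C) (e : x ⊗ x ≅ 𝟙_ C) {z : C} :
    (b : Bool) → (z ⟶ tgt x b) → (z ⊗ x ⟶ tgt x (!b))
  | true, f => (f ▷ x) ≫ e.hom
  | false, f => (f ▷ x) ≫ (λ_ x).hom

/-- The evaluation morphisms `φ^{(d)} : x^{⊗d} ⟶ x` (`d` odd) resp. `x^{⊗d} ⟶ 𝟙` (`d` even):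
`φ^{(0)} := id`, `φ^{(d+1)} := (φ^{(d)} ⊗ id_x) ≫ e` if `d` is odd and
`φ^{(d+1)} := (φ^{(d)} ⊗ id_x) ≫ λ_x` if `d` is even. -/
def phi (x : C) (e : x ⊗ x ≅ 𝟙_ C) : (d : ℕ) → (pow x d ⟶ tgt x (par d))
  | 0 => 𝟙 (𝟙_ C)
  | d + 1 => step x e (par d) (phi x e d)

/-- The comparison morphisms `c_{p,q}`: the counit `e` if `p, q` are both odd, the left
unitor if `p` is even and `q` odd, the right unitor if `p` is odd and `q` even, and the
unitor `λ_𝟙` if both are even. -/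
def cmp (x : C) (e : x ⊗ x ≅ 𝟙_ C) :
    (a b : Bool) → (tgt x a ⊗ tgt x b ⟶ tgt x (xor a b))
  | true, true => e.hom
  | false, true => (λ_ x).hom
  | true, false => (ρ_ x).hom
  | false, false => (λ_ (𝟙_ C)).hom

lemma par_add (p q : ℕ) : par (p + q) = xor (par p) (par q) := by
  induction q with
  | zero => simp [par]
  | succ q ih =>
      show par ((p + q) + 1) = xor (par p) (par (q + 1))
      simp only [par, ih]
      cases par p <;> cases par q <;> rfl

section

variable (x : C) (e : x ⊗ x ≅ 𝟙_ C)

lemma whiskerRight_comp_step {z z' : C} (m : z' ⟶ z) (b : Bool) (f : z ⟶ tgt x b) :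
    m ▷ x ≫ step x e b f = step x e b (m ≫ f) := by
  cases b
  · exact (comp_whiskerRight_assoc m f x (λ_ x).hom).symm
  · exact (comp_whiskerRight_assoc m f x e.hom).symm

lemma step_eq_step_comp_eqToHom {z : C} {b b' : Bool} (h : b = b') (f : z ⟶ tgt x b) :
    step x e b f = step x e b' (f ≫ eqToHom (congrArg (tgt x) h)) ≫
      eqToHom (congrArg (tgt x ∘ not) h.symm) := by
  subst h; simp

lemma tensorHom_id_comp_cmp_false {P : C} (a : Bool) (f : P ⟶ tgt x a) :
    (f ⊗ₘ 𝟙 (𝟙_ C)) ≫ cmp x e a false =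
      (ρ_ P).hom ≫ f ≫ eqToHom (congrArg (tgt x) (Bool.xor_false a).symm) := by
  cases a
  · show (f ⊗ₘ 𝟙 (𝟙_ C)) ≫ (λ_ (𝟙_ C)).hom = (ρ_ P).hom ≫ f ≫ 𝟙 _
    monoidal
  · show (f ⊗ₘ 𝟙 (𝟙_ C)) ≫ (ρ_ x).hom = (ρ_ P).hom ≫ f ≫ 𝟙 _
    monoidal

lemma associator_inv_comp_step_cmp
    (he : (e.hom ⊗ₘ 𝟙 x) ≫ (λ_ x).hom = (α_ x x x).hom ≫ (𝟙 x ⊗ₘ e.hom) ≫ (ρ_ x).hom)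
    (a b : Bool) :
    (α_ (tgt x a) (tgt x b) x).inv ≫ step x e (xor a b) (cmp x e a b) ≫
      eqToHom (congrArg (tgt x) (Bool.xor_not a b).symm) =
    tgt x a ◁ step x e b (𝟙 _) ≫ cmp x e a (!b) := by
  cases a <;> cases b
  · show (α_ (𝟙_ C) (𝟙_ C) x).inv ≫ ((λ_ (𝟙_ C)).hom ▷ x ≫ (λ_ x).hom) ≫ 𝟙 x =
      𝟙_ C ◁ (𝟙 (𝟙_ C) ▷ x ≫ (λ_ x).hom) ≫ (λ_ x).hom
    monoidal
  · show (α_ (𝟙_ C) x x).inv ≫ ((λ_ x).hom ▷ x ≫ e.hom) ≫ 𝟙 (𝟙_ C) =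
      𝟙_ C ◁ (𝟙 x ▷ x ≫ e.hom) ≫ (λ_ (𝟙_ C)).hom
    monoidal
  · show (α_ x (𝟙_ C) x).inv ≫ ((ρ_ x).hom ▷ x ≫ e.hom) ≫ 𝟙 (𝟙_ C) =
      x ◁ (𝟙 (𝟙_ C) ▷ x ≫ (λ_ x).hom) ≫ e.hom
    monoidal
  · show (α_ x x x).inv ≫ (e.hom ▷ x ≫ (λ_ x).hom) ≫ 𝟙 x =
      x ◁ (𝟙 x ▷ x ≫ e.hom) ≫ (ρ_ x).hom
    rw [← tensorHom_id, he]
    simp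

lemma associator_inv_comp_step_tensorHom_cmp
    (he : (e.hom ⊗ₘ 𝟙 x) ≫ (λ_ x).hom = (α_ x x x).hom ≫ (𝟙 x ⊗ₘ e.hom) ≫ (ρ_ x).hom)
    (a b : Bool) {P Q : C} (f : P ⟶ tgt x a) (g : Q ⟶ tgt x b) :
    (α_ P Q x).inv ≫ step x e (xor a b) ((f ⊗ₘ g) ≫ cmp x e a b) ≫
      eqToHom (congrArg (tgt x) (Bool.xor_not a b).symm) =
    (f ⊗ₘ step x e b g) ≫ cmp x e a (!b) := by
  calc _ = (f ⊗ₘ g ▷ x) ≫ (α_ (tgt x a) (tgt x b) x).inv ≫ step x e (xor a b) (cmp x e a b) ≫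
        eqToHom (congrArg (tgt x) (Bool.xor_not a b).symm) := by
        rw [← whiskerRight_comp_step, ← tensorHom_id, Category.assoc,
          ← associator_inv_naturality_assoc, tensorHom_id]
    _ = (f ⊗ₘ step x e b g) ≫ cmp x e a (!b) := by
        rw [associator_inv_comp_step_cmp x e he, tensorHom_def_assoc, ← whiskerLeft_comp_assoc,
          whiskerRight_comp_step, Category.comp_id, tensorHom_def_assoc]

lemma mu_comp_phi_comp_eqToHom
    (he : (e.hom ⊗ₘ 𝟙 x) ≫ (λ_ x).hom = (α_ x x x).hom ≫ (𝟙 x ⊗ₘ e.hom) ≫ (ρ_ x).hom)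
    (p q : ℕ) :
    mu x p q ≫ phi x e (p + q) ≫ eqToHom (congrArg (tgt x) (par_add p q)) =
      (phi x e p ⊗ₘ phi x e q) ≫ cmp x e (par p) (par q) := by
  induction q with
  | zero => exact (tensorHom_id_comp_cmp_false x e (par p) (phi x e p)).symm
  | succ q ih =>
      show ((α_ (pow x p) (pow x q) x).inv ≫ mu x p q ▷ x) ≫
          step x e (par (p + q)) (phi x e (p + q)) ≫
          eqToHom (congrArg (tgt x) ((congrArg not (par_add p q)).trans (Bool.xor_not _ _).symm)) =
        (phi x e p ⊗ₘ step x e (par q) (phi x e q)) ≫ cmp x e (par p) (!(par q))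
      rw [Category.assoc, ← Category.assoc (mu x p q ▷ x), whiskerRight_comp_step,
        step_eq_step_comp_eqToHom x e (par_add p q)]
      simp only [Category.assoc, eqToHom_trans]
      rw [ih]
      exact associator_inv_comp_step_tensorHom_cmp x e he (par p) (par q) (phi x e p) (phi x e q)

end

/-- Generalized associativity in a strongly 2-torsion coherent 2-group: if `C` is a
monoidal groupoid and `e : x ⊗ x ≅ 𝟙` satisfies the strong 2-torsion condition
`(e ⊗ id_x) ≫ λ_x = α ≫ (id_x ⊗ e) ≫ ρ_x`, then the evaluation morphisms `φ^{(d)}` are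
independent of the bracketing: `μ_{p,q} ≫ φ^{(p+q)} = (φ^{(p)} ⊗ φ^{(q)}) ≫ c_{p,q}`. -/
theorem phi_bracketing_independence (x : C) (e : x ⊗ x ≅ 𝟙_ C)
    (he : (e.hom ⊗ₘ 𝟙 x) ≫ (λ_ x).hom = (α_ x x x).hom ≫ (𝟙 x ⊗ₘ e.hom) ≫ (ρ_ x).hom)
    (p q : ℕ) :
    mu x p q ≫ phi x e (p + q) =
      (phi x e p ⊗ₘ phi x e q) ≫ cmp x e (par p) (par q) ≫
        eqToHom (congrArg (tgt x) (par_add p q).symm) := by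
  rw [← Category.assoc, ← mu_comp_phi_comp_eqToHom x e he p q]
  simp only [Category.assoc, eqToHom_trans, eqToHom_refl, Category.comp_id]

end StronglyTwoTorsion
end

section
/- Let R be a commutative ring and J an ideal of R with 2 ∈ J, and consider the ideals Ĩ and I of the group ring R[ℤ/2ℤ] defined from J. Fix n ≥ 1, and consider the isomorphisms of additive groups Ĩⁿ/Ĩⁿ⁺¹ ≅ (Jⁿ/Jⁿ⁺¹) × (Jⁿ/Jⁿ⁺¹) induced by (π₀, π₁), Iⁿ/Iⁿ⁺¹ ≅ (Jⁿ/Jⁿ⁺¹) × (Jⁿ⁻¹/Jⁿ) induced by (ε, π₀), and Ĩⁿ⁻¹/Ĩⁿ ≅ (Jⁿ⁻¹/Jⁿ) × (Jⁿ⁻¹/Jⁿ) induced by (π₀, π₁). Under these identifications, the map Ĩⁿ/Ĩⁿ⁺¹ → Iⁿ/Iⁿ⁺¹ induced by the inclusion Ĩⁿ ⊆ Iⁿ is given by (u, v) ↦ (u + v, 0), and the map Iⁿ/Iⁿ⁺¹ → Ĩⁿ⁻¹/Ĩⁿ induced by the inclusion Iⁿ ⊆ Ĩⁿ⁻¹ is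 given by (u, v) ↦ (v, v). -/
/-! `Ĩ` is the extension of `J` along `R → R[ℤ/2ℤ]`, so `Ĩⁿ` is the extension of `Jⁿ` and
consists of the elements with both coefficients in `Jⁿ`. For the augmentation ideal one uses
`π₀(xy) = π₀(x) ε(y) + ε(x) π₁(y) - 2 π₀(x) π₁(y)` (and the same with `π₁(xy)`, `π₀(y)`):
with `2 ∈ J`, induction shows that both coefficients of an element of `Iⁿ` lie in `Jⁿ⁻¹`,
and then `π₁(x) - π₀(x) = ε(x) - 2 π₀(x) ∈ Jⁿ`. -/

/-- The two-element group `ℤ/2ℤ` (written multiplicatively). -/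
abbrev G2 : Type := Multiplicative (ZMod 2)

/-- The identity element of `ℤ/2ℤ`. -/
def g0 : G2 := Multiplicative.ofAdd (0 : ZMod 2)

/-- The nontrivial element of `ℤ/2ℤ`. -/
def g1 : G2 := Multiplicative.ofAdd (1 : ZMod 2)

/-- The group ring `R[ℤ/2ℤ]`. -/
abbrev GroupRing (R : Type*) [CommRing R] : Type _ := MonoidAlgebra R G2

/-- The coefficient `π₀(x)` of `x ∈ R[ℤ/2ℤ]` at the identity element. -/
def pi0 {R : Type*} [CommRing R] (x : GroupRing R) : R := x.coeff g0

/-- The coefficient `π₁(x)` of `x ∈ R[ℤ/2ℤ]` at the nontrivial element. -/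
def pi1 {R : Type*} [CommRing R] (x : GroupRing R) : R := x.coeff g1

/-- The augmentation ring homomorphism `ε : R[ℤ/2ℤ] → R`. -/
noncomputable def aug (R : Type*) [CommRing R] : GroupRing R →+* R :=
  ((MonoidAlgebra.lift R R G2) 1).toRingHom

lemma univ_G2 : (Finset.univ : Finset G2) = {g0, g1} := by decide

/-- The augmentation is `ε(x) = π₀(x) + π₁(x)`. -/
lemma aug_apply {R : Type*} [CommRing R] (x : GroupRing R) :
    aug R x = pi0 x + pi1 x := by
  classical
  show ((MonoidAlgebra.lift R R G2) (1 : G2 →* R)) x = x.coeff g0 + x.coeff g1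
  rw [MonoidAlgebra.lift_apply]
  simp only [MonoidHom.one_apply, smul_eq_mul, mul_one]
  rw [Finsupp.sum_fintype _ _ (fun _ => rfl), univ_G2,
    Finset.sum_insert (by decide), Finset.sum_singleton]

lemma g0_or_g1 (a : G2) : a = g0 ∨ a = g1 := by revert a; decide

lemma mul_coeff_mem {R : Type*} [CommRing R] (J : Ideal R) (c x : GroupRing R)
    (hx : ∀ a : G2, x.coeff a ∈ J) (g : G2) : (c * x).coeff g ∈ J := by
  classical
  rw [MonoidAlgebra.coeff_mul]
  refine Ideal.sum_mem _ fun a₁ _ => Ideal.sum_mem _ fun a₂ _ => ?_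
  dsimp only
  split_ifs
  · exact Ideal.mul_mem_left _ _ (hx a₂)
  · exact J.zero_mem

/-- The ideal `Ĩ := {x | π₀(x) ∈ J and π₁(x) ∈ J}` of the group ring `R[ℤ/2ℤ]`. -/
def Itilde {R : Type*} [CommRing R] (J : Ideal R) : Ideal (GroupRing R) where
  carrier := {x | pi0 x ∈ J ∧ pi1 x ∈ J}
  zero_mem' := by
    constructor <;> simp [pi0, pi1]
  add_mem' := by
    intro x y hx hy
    exact ⟨by simpa [pi0] using J.add_mem hx.1 hy.1,
      by simpa [pi1] using J.add_mem hx.2 hy.2⟩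
  smul_mem' := by
    intro c x hx
    have hall : ∀ a : G2, x.coeff a ∈ J := by
      intro a
      rcases g0_or_g1 a with h | h
      · rw [h]; exact hx.1
      · rw [h]; exact hx.2
    exact ⟨by simpa [pi0, smul_eq_mul] using mul_coeff_mem J c x hall g0,
      by simpa [pi1, smul_eq_mul] using mul_coeff_mem J c x hall g1⟩

/-- The ideal `I := ε⁻¹(J)` of the group ring `R[ℤ/2ℤ]`. -/
noncomputable def Iaug {R : Type*} [CommRing R] (J : Ideal R) : Ideal (GroupRing R) :=
  J.comap (aug R)

lemma mem_Iaug {R : Type*} [CommRing R] (J : Ideal R) (x : GroupRing R) :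
    x ∈ Iaug J ↔ pi0 x + pi1 x ∈ J := by
  rw [Iaug, Ideal.mem_comap, aug_apply]

section

variable {R : Type*} [CommRing R]

lemma pi0_mul (x y : GroupRing R) : pi0 (x * y) = pi0 x * pi0 y + pi1 x * pi1 y := by
  rw [pi0, MonoidAlgebra.coeff_mul_apply_left, Finsupp.sum_fintype _ _ (by simp), univ_G2,
    Finset.sum_pair (by decide)]
  rfl

lemma pi1_mul (x y : GroupRing R) : pi1 (x * y) = pi0 x * pi1 y + pi1 x * pi0 y := by
  rw [pi1, MonoidAlgebra.coeff_mul_apply_left, Finsupp.sum_fintype _ _ (by simp), univ_G2,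
    Finset.sum_pair (by decide)]
  rfl

lemma pi0_algebraMap (r : R) : pi0 (algebraMap R (GroupRing R) r) = r := by
  simp [pi0, g0]

lemma pi1_algebraMap (r : R) : pi1 (algebraMap R (GroupRing R) r) = 0 := by
  simp [pi1, g1]

lemma eq_algebraMap_add_single_mul (x : GroupRing R) :
    x = algebraMap R _ (pi0 x) + MonoidAlgebra.single g1 1 * algebraMap R _ (pi1 x) := by
  ext g
  rcases g0_or_g1 g with rfl | rfl <;> simp [pi0, pi1, g0, g1]

lemma Itilde_eq_map (J : Ideal R) : Itilde J = J.map (algebraMap R (GroupRing R)) := by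
  refine le_antisymm (fun x hx => ?_) (Ideal.map_le_iff_le_comap.2 fun r hr => ?_)
  · rw [eq_algebraMap_add_single_mul x]
    exact add_mem (Ideal.mem_map_of_mem _ hx.1)
      (Ideal.mul_mem_left _ _ (Ideal.mem_map_of_mem _ hx.2))
  · exact ⟨(pi0_algebraMap r).symm ▸ hr, (pi1_algebraMap r).symm ▸ J.zero_mem⟩

lemma Itilde_pow (J : Ideal R) (n : ℕ) : Itilde J ^ n = Itilde (J ^ n) := by
  rw [Itilde_eq_map, Itilde_eq_map, Ideal.map_pow]

lemma Itilde_le_Iaug (J : Ideal R) : Itilde J ≤ Iaug J :=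
  fun x hx => (mem_Iaug J x).2 (add_mem hx.1 hx.2)

lemma Ideal.pow_pred_mul_le (J : Ideal R) (n : ℕ) : J ^ (n - 1) * J ≤ J ^ n := by
  rw [← pow_succ]
  exact Ideal.pow_le_pow_right (by omega)

lemma pi0_mul_eq_aug (x y : GroupRing R) :
    pi0 (x * y) = pi0 x * aug R y + aug R x * pi1 y - 2 * pi0 x * pi1 y := by
  rw [pi0_mul, aug_apply, aug_apply]; ring

lemma pi1_mul_eq_aug (x y : GroupRing R) :
    pi1 (x * y) = pi0 x * aug R y + aug R x * pi0 y - 2 * pi0 x * pi0 y := by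
  rw [pi1_mul, aug_apply, aug_apply]; ring

lemma Itilde_inf_Iaug_mul_Iaug_le {J : Ideal R} (h2 : (2 : R) ∈ J) (K L : Ideal R) :
    (Itilde K ⊓ Iaug L) * Iaug J ≤ Itilde (K * J ⊔ L) := by
  refine Ideal.mul_le.2 fun x ⟨hxK, hxL⟩ y hyJ => ?_
  have hxL : aug R x ∈ L := hxL
  have hyJ : aug R y ∈ J := hyJ
  have h2x : 2 * pi0 x ∈ K * J := mul_comm (pi0 x) 2 ▸ Ideal.mul_mem_mul hxK.1 h2
  have key : ∀ c, pi0 x * aug R y + aug R x * c - 2 * pi0 x * c ∈ K * J ⊔ L := fun c =>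
    sub_mem (add_mem (Ideal.mem_sup_left (Ideal.mul_mem_mul hxK.1 hyJ))
      (Ideal.mem_sup_right (L.mul_mem_right _ hxL)))
      (Ideal.mem_sup_left (Ideal.mul_mem_right _ _ h2x))
  exact ⟨pi0_mul_eq_aug x y ▸ key _, pi1_mul_eq_aug x y ▸ key _⟩

lemma Iaug_pow_le_Iaug (J : Ideal R) (n : ℕ) : Iaug J ^ n ≤ Iaug (J ^ n) :=
  Ideal.le_comap_pow _ n

lemma Iaug_pow_le_Itilde {J : Ideal R} (h2 : (2 : R) ∈ J) (n : ℕ) :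
    Iaug J ^ n ≤ Itilde (J ^ (n - 1)) := by
  induction n with
  | zero =>
    simp only [Nat.zero_sub, pow_zero, Ideal.one_eq_top]
    exact fun _ _ => ⟨Submodule.mem_top, Submodule.mem_top⟩
  | succ n ih =>
    calc Iaug J ^ (n + 1) = Iaug J ^ n * Iaug J := pow_succ _ _
      _ ≤ (Itilde (J ^ (n - 1)) ⊓ Iaug (J ^ n)) * Iaug J :=
        Ideal.mul_mono_left (le_inf ih (Iaug_pow_le_Iaug J n))
      _ ≤ Itilde (J ^ (n - 1) * J ⊔ J ^ n) := Itilde_inf_Iaug_mul_Iaug_le h2 _ _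
      _ = Itilde (J ^ (n + 1 - 1)) := by rw [sup_eq_right.2 (J.pow_pred_mul_le n)]; rfl

lemma pi1_sub_pi0_mem {J : Ideal R} (h2 : (2 : R) ∈ J) {n : ℕ} {x : GroupRing R}
    (hx : x ∈ Iaug J ^ n) : pi1 x - pi0 x ∈ J ^ n := by
  have h2x : 2 * pi0 x ∈ J ^ n :=
    J.pow_pred_mul_le n (mul_comm (pi0 x) 2 ▸ Ideal.mul_mem_mul (Iaug_pow_le_Itilde h2 n hx).1 h2)
  have hε : pi0 x + pi1 x ∈ J ^ n := (mem_Iaug _ x).1 (Iaug_pow_le_Iaug J n hx)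
  rw [show pi1 x - pi0 x = (pi0 x + pi1 x) - 2 * pi0 x by ring]
  exact sub_mem hε h2x

end

theorem Itilde_Iaug_comparison_general {R : Type*} [CommRing R] (J : Ideal R)
    (h2 : (2 : R) ∈ J) (n : ℕ) :
    Itilde J ^ n ≤ Iaug J ^ n ∧ Iaug J ^ n ≤ Itilde J ^ (n - 1) ∧
    (∀ x ∈ Itilde J ^ n,
      -- the image of the class of `x` in `Iⁿ/Iⁿ⁺¹` is `α(u, v) = (u + v, 0)`
      Ideal.Quotient.mk (J ^ (n + 1)) (pi0 x + pi1 x) =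
        Ideal.Quotient.mk (J ^ (n + 1)) (pi0 x) + Ideal.Quotient.mk (J ^ (n + 1)) (pi1 x) ∧
      Ideal.Quotient.mk (J ^ n) (pi0 x) = 0) ∧
    (∀ x ∈ Iaug J ^ n,
      -- the image of the class of `x` in `Ĩⁿ⁻¹/Ĩⁿ` is `β(u, v) = (v, v)`
      Ideal.Quotient.mk (J ^ n) (pi0 x) = Ideal.Quotient.mk (J ^ n) (pi0 x) ∧
      Ideal.Quotient.mk (J ^ n) (pi1 x) = Ideal.Quotient.mk (J ^ n) (pi0 x)) := by
  refine ⟨Ideal.pow_right_mono (Itilde_le_Iaug J) n,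
    Itilde_pow J (n - 1) ▸ Iaug_pow_le_Itilde h2 n,
    fun x hx => ⟨map_add _ _ _, ?_⟩, fun x hx => ⟨rfl, ?_⟩⟩
  · exact Ideal.Quotient.eq_zero_iff_mem.2 (Itilde_pow J n ▸ hx).1
  · exact (Ideal.Quotient.mk_eq_mk_iff_sub_mem _ _).2 (pi1_sub_pi0_mem h2 hx)

/-- Comparison of the two fundamental filtrations of the group ring `R[ℤ/2ℤ]` when
`2 ∈ J`.  Under the identifications `Ĩⁿ/Ĩⁿ⁺¹ ≅ (Jⁿ/Jⁿ⁺¹)²` via `(π₀, π₁)`,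
`Iⁿ/Iⁿ⁺¹ ≅ (Jⁿ/Jⁿ⁺¹) × (Jⁿ⁻¹/Jⁿ)` via `(ε, π₀)` and `Ĩⁿ⁻¹/Ĩⁿ ≅ (Jⁿ⁻¹/Jⁿ)²` via
`(π₀, π₁)`, the map induced by the inclusion `Ĩⁿ ⊆ Iⁿ` is `(u, v) ↦ (u + v, 0)`, and the
map induced by the inclusion `Iⁿ ⊆ Ĩⁿ⁻¹` is `(u, v) ↦ (v, v)`. -/
theorem Itilde_Iaug_comparison {R : Type*} [CommRing R] (J : Ideal R)
    (h2 : (2 : R) ∈ J) (n : ℕ) (hn : 1 ≤ n) :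
    Itilde J ^ n ≤ Iaug J ^ n ∧ Iaug J ^ n ≤ Itilde J ^ (n - 1) ∧
    (∀ x ∈ Itilde J ^ n,
      -- the image of the class of `x` in `Iⁿ/Iⁿ⁺¹` is `α(u, v) = (u + v, 0)`
      Ideal.Quotient.mk (J ^ (n + 1)) (pi0 x + pi1 x) =
        Ideal.Quotient.mk (J ^ (n + 1)) (pi0 x) + Ideal.Quotient.mk (J ^ (n + 1)) (pi1 x) ∧
      Ideal.Quotient.mk (J ^ n) (pi0 x) = 0) ∧
    (∀ x ∈ Iaug J ^ n,
      -- the image of the class of `x` in `Ĩⁿ⁻¹/Ĩⁿ` is `β(u, v) = (v, v)`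
      Ideal.Quotient.mk (J ^ n) (pi0 x) = Ideal.Quotient.mk (J ^ n) (pi0 x) ∧
      Ideal.Quotient.mk (J ^ n) (pi1 x) = Ideal.Quotient.mk (J ^ n) (pi0 x)) :=
  Itilde_Iaug_comparison_general J h2 n
end

section
/- Let K be a field of characteristic different from 2, let d ∈ K be nonzero, and let L := K[X]/(X² − d), a 2-dimensional commutative K-algebra with basis (1, s) where s is the class of X (so s² = d). Let a = a₀·1 + a₁·s be a unit of L, with a₀, a₁ ∈ K, and let q_a be the quadratic form on the 2-dimensional K-vector space L defined by q_a(x) = Tr_{L/K}(a·x²), where Tr_{L/K} is the algebra trace. Then: (i) if a₀ = 0, the form q_a is hyperbolic, i.e. equivalent to the diagonal quadratic form ⟨1, −1⟩; (ii) if a₀ ≠ 0, the form q_a is equivalent to the diagonal quadratic form ⟨2a₀, 2a₀·d·(a₀² − d·a₁²)⟩. -/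
open Polynomial

/-- The quadratic form `x ↦ Tr_{L/K}(a · x²)` on a commutative `K`-algebra `L`,
where `Tr_{L/K}` is the algebra trace. -/
noncomputable def traceQF (K : Type*) [Field K] {L : Type*} [CommRing L] [Algebra K L]
    (a : L) : QuadraticForm K L :=
  LinearMap.BilinMap.toQuadraticMap
  (LinearMap.mk₂ K (fun x y => Algebra.trace K L (a * x * y))
    (fun x x' y => show Algebra.trace K L (a * (x + x') * y) = _ by
      rw [show a * (x + x') * y = a * x * y + a * x' * y by ring, map_add])
    (fun c x y => show Algebra.trace K L (a * (c • x) * y) = _ by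
      rw [show a * (c • x) * y = c • (a * x * y) by
        rw [mul_smul_comm, smul_mul_assoc], map_smul])
    (fun x y y' => show Algebra.trace K L (a * x * (y + y')) = _ by
      rw [show a * x * (y + y') = a * x * y + a * x * y' by ring, map_add])
    (fun c x y => show Algebra.trace K L (a * x * (c • y)) = _ by
      rw [mul_smul_comm c (a * x) y, map_smul]))

/-- The quadratic étale algebra `L = K[X]/(X² - d)`, a 2-dimensional commutative
`K`-algebra with basis `(1, s)` where `s` is the class of `X` (so `s² = d`). -/
abbrev QuadAlg (K : Type*) [Field K] (d : K) : Type _ := AdjoinRoot (X ^ 2 - C d)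

/-! In the coordinates `x = x₀ + x₁ s` one has `q_a(x) = 2a₀x₀² + 4a₁d·x₀x₁ + 2a₀d·x₁²`, and a
binary form in characteristic `≠ 2` is diagonalised by any orthogonal pair of anisotropic
vectors. For `a₀ ≠ 0` take `1` and `s·ā = a₀s - a₁d` (where `ā = a₀ - a₁s`), with values
`Tr a = 2a₀` and `Tr(a s² ā²) = d·N(a)·Tr ā = 2a₀d·N(a)`; for `a₀ = 0` take `1 ± s/(4a₁d)`, with
values `±1`. Anisotropy rests on `N(a) = a₀² - d a₁² ≠ 0`: since `a ā = N(a)` and `a` is a unit,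
`N(a) = 0` would force `ā = 0`. -/

namespace QuadraticMap

section

variable {R M ι : Type*} [CommRing R] [Invertible (2 : R)] [AddCommGroup M] [Module R M]
  [Fintype ι]

theorem equivalent_weightedSumSquares_of_iIsOrtho (Q : QuadraticForm R M)
    (v : Module.Basis ι R M) (hv : (associated (R := R) Q).IsOrthoᵢ v) :
    Q.Equivalent (weightedSumSquares R fun i => Q (v i)) :=
  basisRepr_eq_of_iIsOrtho Q v hv ▸ ⟨Q.isometryEquivBasisRepr v⟩

end

section

variable {K V : Type*} [Field K] [Invertible (2 : K)] [AddCommGroup V] [Module K V]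

theorem linearIndependent_pair_of_isOrtho {Q : QuadraticForm K V} {v₀ v₁ : V}
    (h : Q.IsOrtho v₀ v₁) (h₀ : Q v₀ ≠ 0) (h₁ : Q v₁ ≠ 0) :
    LinearIndependent K ![v₀, v₁] := by
  have h₀₁ := associated_isOrtho.mpr h
  have h₁₀ := associated_isOrtho.mpr h.symm
  refine LinearIndependent.pair_iff.mpr fun s t hst => ⟨?_, ?_⟩
  · have := congrArg (associated (R := K) Q v₀) hst
    simpa [h₀₁, associated_eq_self_apply, h₀] using this
  · have := congrArg (associated (R := K) Q v₁) hst
    simpa [h₁₀, associated_eq_self_apply, h₁] using this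

theorem equivalent_weightedSumSquares_of_isOrtho (Q : QuadraticForm K V)
    (hV : Module.finrank K V = 2) {v₀ v₁ : V}
    (h : Q.IsOrtho v₀ v₁) (h₀ : Q v₀ ≠ 0) (h₁ : Q v₁ ≠ 0) :
    Q.Equivalent (weightedSumSquares K ![Q v₀, Q v₁]) := by
  let v := basisOfLinearIndependentOfCardEqFinrank (linearIndependent_pair_of_isOrtho h h₀ h₁)
    (by rw [hV, Fintype.card_fin])
  have hv : (associated (R := K) Q).IsOrthoᵢ v := by
    intro i j hij
    fin_cases i <;> fin_cases j <;> simp_all [v, Function.onFun, h.symm]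
  have hQv : (fun i => Q (v i)) = ![Q v₀, Q v₁] := by
    ext i; fin_cases i <;> simp [v]
  exact hQv ▸ Q.equivalent_weightedSumSquares_of_iIsOrtho v hv

end

end QuadraticMap

namespace QuadAlg

variable {K : Type*} [Field K] {d : K}

noncomputable def mk (d x₀ x₁ : K) : QuadAlg K d :=
  algebraMap K (QuadAlg K d) x₀ + x₁ • AdjoinRoot.root (X ^ 2 - C d)

theorem root_sq : AdjoinRoot.root (X ^ 2 - C d) ^ 2 = algebraMap K (QuadAlg K d) d := by
  have := AdjoinRoot.eval₂_root (X ^ 2 - C d)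
  rwa [eval₂_sub, eval₂_X_pow, eval₂_C, sub_eq_zero, ← AdjoinRoot.algebraMap_eq] at this

theorem mk_add_mk (x₀ x₁ y₀ y₁ : K) : mk d x₀ x₁ + mk d y₀ y₁ = mk d (x₀ + y₀) (x₁ + y₁) := by
  simp only [mk, map_add, add_smul]; abel

theorem mk_mul_mk (x₀ x₁ y₀ y₁ : K) :
    mk d x₀ x₁ * mk d y₀ y₁ = mk d (x₀ * y₀ + d * x₁ * y₁) (x₀ * y₁ + x₁ * y₀) := by
  simp only [mk, Algebra.smul_def, map_add, map_mul]
  linear_combination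
    (algebraMap K (QuadAlg K d) x₁ * algebraMap K (QuadAlg K d) y₁) * root_sq (d := d)

theorem mk_zero_zero : mk d 0 0 = 0 := by simp [mk]

noncomputable def powerBasis : PowerBasis K (QuadAlg K d) :=
  AdjoinRoot.powerBasis (X_pow_sub_C_ne_zero two_pos d)

theorem finrank_eq_two : Module.finrank K (QuadAlg K d) = 2 := by
  rw [(powerBasis (d := d)).finrank, powerBasis, AdjoinRoot.powerBasis_dim, natDegree_X_pow_sub_C]

instance : Nontrivial (QuadAlg K d) :=
  AdjoinRoot.nontrivial _ (by rw [degree_X_pow_sub_C two_pos]; decide)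

theorem trace_root : Algebra.trace K (QuadAlg K d) (AdjoinRoot.root (X ^ 2 - C d)) = 0 := by
  have := (powerBasis (d := d)).trace_gen_eq_nextCoeff_minpoly
  rw [powerBasis, AdjoinRoot.minpoly_powerBasis_gen_of_monic (monic_X_pow_sub_C d two_ne_zero)]
    at this
  simpa [nextCoeff] using this

theorem trace_mk (x₀ x₁ : K) : Algebra.trace K (QuadAlg K d) (mk d x₀ x₁) = 2 * x₀ := by
  rw [mk, map_add, map_smul, trace_root, Algebra.trace_algebraMap, finrank_eq_two, smul_zero,
    add_zero, nsmul_eq_mul, Nat.cast_ofNat]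

theorem traceQF_mk (a₀ a₁ x₀ x₁ : K) :
    traceQF K (mk d a₀ a₁) (mk d x₀ x₁) =
      2 * a₀ * x₀ ^ 2 + 4 * a₁ * d * x₀ * x₁ + 2 * a₀ * d * x₁ ^ 2 := by
  change Algebra.trace K _ (mk d a₀ a₁ * mk d x₀ x₁ * mk d x₀ x₁) = _
  rw [mk_mul_mk, mk_mul_mk, trace_mk]
  ring

variable [Invertible (2 : K)]

theorem sq_sub_mul_sq_ne_zero_of_isUnit (hd : d ≠ 0) {a₀ a₁ : K} (ha : IsUnit (mk d a₀ a₁)) :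
    a₀ ^ 2 - d * a₁ ^ 2 ≠ 0 := by
  intro hN
  have hconj : mk d a₀ (-a₁) = 0 := by
    refine ha.mul_right_eq_zero.mp ?_
    rw [mk_mul_mk, ← mk_zero_zero]
    congr 1
    · linear_combination hN
    · ring
  have h₀ : a₀ = 0 := by
    simpa [trace_mk, two_ne_zero] using congrArg (Algebra.trace K (QuadAlg K d)) hconj
  have h₁ : a₁ = 0 := by
    have := congrArg (fun x => Algebra.trace K (QuadAlg K d) (mk d 0 1 * x)) hconj
    simpa [mk_mul_mk, trace_mk, two_ne_zero, hd] using this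
  exact ha.ne_zero (by rw [h₀, h₁, mk_zero_zero])

open QuadraticMap in
theorem traceQF_mk_equivalent_of_ne_zero (hd : d ≠ 0) {a₀ a₁ : K} (ha₀ : a₀ ≠ 0)
    (hN : a₀ ^ 2 - d * a₁ ^ 2 ≠ 0) :
    (traceQF K (mk d a₀ a₁)).Equivalent
      (weightedSumSquares K ![2 * a₀, 2 * a₀ * d * (a₀ ^ 2 - d * a₁ ^ 2)]) := by
  have hv₀ : traceQF K (mk d a₀ a₁) (mk d 1 0) = 2 * a₀ := by rw [traceQF_mk]; ring
  have hv₁ : traceQF K (mk d a₀ a₁) (mk d (-(a₁ * d)) a₀) =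
      2 * a₀ * d * (a₀ ^ 2 - d * a₁ ^ 2) := by
    rw [traceQF_mk]; ring
  have horth : (traceQF K (mk d a₀ a₁)).IsOrtho (mk d 1 0) (mk d (-(a₁ * d)) a₀) := by
    rw [isOrtho_def, mk_add_mk, traceQF_mk, traceQF_mk, traceQF_mk]; ring
  have := equivalent_weightedSumSquares_of_isOrtho _ finrank_eq_two horth
    (by simp [hv₀, ha₀, two_ne_zero]) (by simp [hv₁, ha₀, hd, hN, two_ne_zero])
  rwa [hv₀, hv₁] at this

open QuadraticMap in
theorem traceQF_mk_equivalent_hyperbolic {a₁ : K} (ha₁d : a₁ * d ≠ 0) :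
    (traceQF K (mk d 0 a₁)).Equivalent (weightedSumSquares K ![(1 : K), -1]) := by
  obtain ⟨c, hc⟩ : ∃ c, 2 * 2 * (a₁ * d) * c = 1 :=
    ⟨_, mul_inv_cancel₀ (mul_ne_zero (mul_ne_zero two_ne_zero two_ne_zero) ha₁d)⟩
  have hv₀ : traceQF K (mk d 0 a₁) (mk d 1 c) = 1 := by
    rw [traceQF_mk]; linear_combination hc
  have hv₁ : traceQF K (mk d 0 a₁) (mk d 1 (-c)) = -1 := by
    rw [traceQF_mk]; linear_combination -hc
  have horth : (traceQF K (mk d 0 a₁)).IsOrtho (mk d 1 c) (mk d 1 (-c)) := by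
    rw [isOrtho_def, mk_add_mk, traceQF_mk, traceQF_mk, traceQF_mk]; ring
  have := equivalent_weightedSumSquares_of_isOrtho _ finrank_eq_two horth
    (by simp [hv₀]) (by simp [hv₁])
  rwa [hv₀, hv₁] at this

end QuadAlg

/-- Computation of the transfer `(Tr_{L/K})₊⟨a⟩` of a rank-one form along the quadratic
étale algebra `L = K[X]/(X² - d)`: for a unit `a = a₀·1 + a₁·s` of `L`, the quadratic form
`q_a(x) = Tr_{L/K}(a·x²)` is hyperbolic (equivalent to `⟨1, -1⟩`) if `a₀ = 0`, and is
equivalent to the diagonal form `⟨2a₀, 2a₀·d·(a₀² - d·a₁²)⟩` if `a₀ ≠ 0`. -/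
theorem traceQF_quadAlg_equivalent
    (K : Type*) [Field K] (hK : (2 : K) ≠ 0) (d : K) (hd : d ≠ 0)
    (a : QuadAlg K d) (ha : IsUnit a) (a₀ a₁ : K)
    (haeq : a = algebraMap K (QuadAlg K d) a₀ + a₁ • AdjoinRoot.root (X ^ 2 - C d)) :
    (a₀ = 0 →
      QuadraticMap.Equivalent (traceQF K a)
        (QuadraticMap.weightedSumSquares K ![(1 : K), -1])) ∧
    (a₀ ≠ 0 →
      QuadraticMap.Equivalent (traceQF K a)
        (QuadraticMap.weightedSumSquares K
          ![2 * a₀, 2 * a₀ * d * (a₀ ^ 2 - d * a₁ ^ 2)])) := by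
  have := invertibleOfNonzero hK
  obtain rfl : a = QuadAlg.mk d a₀ a₁ := haeq
  have hN := QuadAlg.sq_sub_mul_sq_ne_zero_of_isUnit hd ha
  refine ⟨fun ha₀ => ?_, fun ha₀ => QuadAlg.traceQF_mk_equivalent_of_ne_zero hd ha₀ hN⟩
  subst ha₀
  exact QuadAlg.traceQF_mk_equivalent_hyperbolic (by
    contrapose! hN
    linear_combination -a₁ * hN)
end

section
/- Let R be a commutative ring equipped with a pre-λ-structure (λᵈ)_{d ∈ ℕ}, an augmentation dim : R → ℤ, and a positive structure P ⊆ R. Then every 1-dimensional element of R is a line element; that is, if x ∈ R satisfies x ≠ 0 and λᵏ(x) = 0 for all k ≥ 2, then x ∈ P, dim(x) = 1, and x is a unit of R. -/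
/-- A *line element* for a pre-λ-structure `lam` on `R`, with augmentation `dim` and
positive elements `P`: a positive unit of dimension `1` whose higher λ-powers vanish. -/
def IsLineElement {R : Type*} [CommRing R] (lam : ℕ → R → R) (dim : R →+* ℤ) (P : Set R)
    (u : R) : Prop :=
  u ∈ P ∧ IsUnit u ∧ dim u = 1 ∧ ∀ k : ℕ, 2 ≤ k → lam k u = 0

/-- In a pre-λ-ring with a positive structure, every 1-dimensional element is a line
element; in particular the ring satisfies the dimension property. -/
theorem oneDimensional_isLineElement {R : Type*} [CommRing R]
    (lam : ℕ → R → R) (dim : R →+* ℤ) (P : Set R)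
    -- pre-λ-structure axioms
    (hlam0 : ∀ x : R, lam 0 x = 1) (hlam1 : ∀ x : R, lam 1 x = x)
    (hlamadd : ∀ (x y : R) (n : ℕ),
      lam n (x + y) = ∑ k ∈ Finset.range (n + 1), lam k x * lam (n - k) y)
    -- positive structure axioms
    (hzero : (0 : R) ∉ P)
    (haddP : ∀ x ∈ insert (0 : R) P, ∀ y ∈ insert (0 : R) P, x + y ∈ insert (0 : R) P)
    (hmulP : ∀ x ∈ insert (0 : R) P, ∀ y ∈ insert (0 : R) P, x * y ∈ insert (0 : R) P)
    (hlamP : ∀ d : ℕ, 1 ≤ d → ∀ x ∈ insert (0 : R) P, lam d x ∈ insert (0 : R) P)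
    (hdiff : ∀ x : R, ∃ p ∈ P, ∃ q ∈ P, x = p - q)
    (hfin : ∀ x ∈ P, ∃ r : ℕ, (r : ℤ) = dim x ∧ lam r x ≠ 0 ∧
      (∀ k : ℕ, r < k → lam k x = 0) ∧ IsLineElement lam dim P (lam r x))
    (hone : IsLineElement lam dim P 1)
    (hmul_line : ∀ u v : R, IsLineElement lam dim P u → IsLineElement lam dim P v →
      IsLineElement lam dim P (u * v))
    (hinv_line : ∀ u v : R, IsLineElement lam dim P u → u * v = 1 →
      IsLineElement lam dim P v)
    -- a 1-dimensional element
    (x : R) (hx : x ≠ 0) (hxlam : ∀ k : ℕ, 2 ≤ k → lam k x = 0) :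
    x ∈ P ∧ dim x = 1 ∧ IsUnit x := by
  obtain ⟨p, hp, q, hq, hxpq⟩ := hdiff x
  have hpxq : p = x + q := by rw [hxpq]; ring
  obtain ⟨s, hsdim, hslamne, hsvan, hsline⟩ := hfin q hq
  obtain ⟨r, hrdim, hrlamne, hrvan, hrline⟩ := hfin p hp
  -- key formula: λ^{m+1}(p) = λ^{m+1}(q) + x·λ^m(q)
  have key : ∀ m : ℕ, lam (m + 1) p = lam (m + 1) q + x * lam m q := by
    intro m
    rw [hpxq, hlamadd, Finset.sum_range_succ', Finset.sum_range_succ']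
    have h0 : ∀ i ∈ Finset.range m,
        lam (i + 1 + 1) x * lam (m + 1 - (i + 1 + 1)) q = 0 := by
      intro i _
      rw [hxlam (i + 1 + 1) (by omega), zero_mul]
    rw [Finset.sum_eq_zero h0]
    simp [hlam0, hlam1]
    ring
  set u := lam s q with hu_def
  have huunit : IsUnit u := hsline.2.1
  obtain ⟨v, huv⟩ := huunit.exists_right_inv
  have h1 : lam (s + 1) p = x * u := by
    rw [key s, hsvan (s + 1) (by omega), zero_add]
  have h2 : ∀ n, s + 2 ≤ n → lam n p = 0 := by
    intro n hn
    obtain ⟨m, rfl⟩ : ∃ m, n = m + 1 := ⟨n - 1, by omega⟩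
    rw [key m, hsvan (m + 1) (by omega), hsvan m (by omega), mul_zero, add_zero]
  have hxu : x * u ≠ 0 := by
    intro h
    apply hx
    calc x = x * (u * v) := by rw [huv, mul_one]
    _ = x * u * v := by ring
    _ = 0 := by rw [h, zero_mul]
  have hr1 : r = s + 1 := by
    by_contra hne
    rcases lt_or_gt_of_ne hne with hlt | hgt
    · exact hxu (h1 ▸ hrvan (s + 1) hlt)
    · exact hrlamne (h2 r (by omega))
  have hxuline : IsLineElement lam dim P (x * u) := by
    rw [← h1, ← hr1]; exact hrline
  have hvline := hinv_line u v hsline huv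
  have hxline : IsLineElement lam dim P x := by
    have := hmul_line (x * u) v hxuline hvline
    have hxuvx : x * u * v = x := by
      rw [mul_assoc, huv, mul_one]
    rwa [hxuvx] at this
  exact ⟨hxline.1, hxline.2.2.1, hxline.2.1⟩
end

section
/- Let K be a commutative ring, A and B associative unital K-algebras, U a left A-module, V a left B-module, and W an abelian group which is simultaneously a left A-module and a left B-module with commuting actions. Then the map Φ sending f to the map (u ⊗ b ↦ (v ↦ f(u ⊗ (b • v)))) is a bijection (and K-linear isomorphism) from the set of K-linear maps f : U ⊗_K V → W satisfying f((a•u) ⊗ v) = a • f(u ⊗ v) and f(u ⊗ (b•v)) = b • f(u ⊗ v) for all a ∈ A, b ∈ B, onto the set of K-linear maps g : U ⊗_K B → Hom_K(V, W) satisfying g((a•u) ⊗ b)(v) = a • (g(u ⊗ b)(v)), g(u ⊗ (b'·b))(v) = b' • (g(u ⊗ b)(v)), and g(u ⊗ (b·b''))(v) = g(u ⊗ b)(b'' • v), for all a ∈ A, b, b', b'' ∈ B, u ∈ U, v ∈ V. The inverse sends g to the map u ⊗ v ↦ g(u ⊗ 1)(v). -/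
open TensorProduct

/-- The hom-tensor lemma: for `K`-algebras `A`, `B`, a left `A`-module `U`, a left `B`-module
`V`, and `W` carrying commuting `A`- and `B`-actions, the `A,B`-balanced `K`-linear maps
`U ⊗_K V → W` correspond bijectively to the `A ⊗ B ⊗ Bᵒᵖ`-linear maps
`U ⊗_K B → Hom_K(V, W)`, via `f ↦ (u ⊗ b ↦ (v ↦ f (u ⊗ b • v)))`,
with inverse `g ↦ (u ⊗ v ↦ g (u ⊗ 1) v)`. -/
theorem homTensor_bijection
    (K A B U V W : Type*) [CommRing K] [Ring A] [Ring B] [Algebra K A] [Algebra K B]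
    [AddCommGroup U] [Module K U] [Module A U] [IsScalarTower K A U]
    [AddCommGroup V] [Module K V] [Module B V] [IsScalarTower K B V]
    [AddCommGroup W] [Module K W] [Module A W] [Module B W]
    [IsScalarTower K A W] [IsScalarTower K B W] [SMulCommClass A B W] :
    (∀ f : U ⊗[K] V →ₗ[K] W,
      ((∀ (a : A) (u : U) (v : V), f ((a • u) ⊗ₜ[K] v) = a • f (u ⊗ₜ[K] v)) ∧
       (∀ (b : B) (u : U) (v : V), f (u ⊗ₜ[K] (b • v)) = b • f (u ⊗ₜ[K] v))) →
      ∃! g : U ⊗[K] B →ₗ[K] (V →ₗ[K] W),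
        ((∀ (a : A) (u : U) (b : B) (v : V),
            g ((a • u) ⊗ₜ[K] b) v = a • g (u ⊗ₜ[K] b) v) ∧
         (∀ (u : U) (b' b : B) (v : V),
            g (u ⊗ₜ[K] (b' * b)) v = b' • g (u ⊗ₜ[K] b) v) ∧
         (∀ (u : U) (b b'' : B) (v : V),
            g (u ⊗ₜ[K] (b * b'')) v = g (u ⊗ₜ[K] b) (b'' • v))) ∧
        (∀ (u : U) (b : B) (v : V), g (u ⊗ₜ[K] b) v = f (u ⊗ₜ[K] (b • v)))) ∧
    (∀ g : U ⊗[K] B →ₗ[K] (V →ₗ[K] W),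
      ((∀ (a : A) (u : U) (b : B) (v : V),
          g ((a • u) ⊗ₜ[K] b) v = a • g (u ⊗ₜ[K] b) v) ∧
       (∀ (u : U) (b' b : B) (v : V),
          g (u ⊗ₜ[K] (b' * b)) v = b' • g (u ⊗ₜ[K] b) v) ∧
       (∀ (u : U) (b b'' : B) (v : V),
          g (u ⊗ₜ[K] (b * b'')) v = g (u ⊗ₜ[K] b) (b'' • v))) →
      ∃! f : U ⊗[K] V →ₗ[K] W,
        ((∀ (a : A) (u : U) (v : V), f ((a • u) ⊗ₜ[K] v) = a • f (u ⊗ₜ[K] v)) ∧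
         (∀ (b : B) (u : U) (v : V), f (u ⊗ₜ[K] (b • v)) = b • f (u ⊗ₜ[K] v))) ∧
        (∀ (u : U) (v : V), f (u ⊗ₜ[K] v) = g (u ⊗ₜ[K] (1 : B)) v)) := by
  constructor
  · rintro f ⟨hA, hB⟩
    have smul_lin : ∀ (b : B) (k : K) (v : V), b • (k • v) = k • (b • v) := by
      intro b k v
      rw [← smul_comm]
    refine ⟨TensorProduct.lift (LinearMap.mk₂ K
      (fun u b => { toFun := fun v => f (u ⊗ₜ[K] (b • v))
                    map_add' := by intro v₁ v₂; rw [smul_add, TensorProduct.tmul_add, map_add]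
                    map_smul' := by
                      intro k v
                      simp only [RingHom.id_apply]
                      rw [smul_lin, TensorProduct.tmul_smul, map_smul] })
      (by intro u₁ u₂ b; ext v; simp [TensorProduct.add_tmul])
      (by intro k u b; ext v; simp [TensorProduct.smul_tmul, TensorProduct.tmul_smul])
      (by intro u b₁ b₂; ext v; simp [add_smul, TensorProduct.tmul_add])
      (by intro k u b; ext v; simp only [LinearMap.coe_mk, AddHom.coe_mk,
            LinearMap.smul_apply, smul_assoc, TensorProduct.tmul_smul, map_smul])),
      ?_, ?_⟩
    · refine ⟨⟨?_, ?_, ?_⟩, ?_⟩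
      · intro a u b v
        simp only [TensorProduct.lift.tmul, LinearMap.mk₂_apply, LinearMap.coe_mk,
          AddHom.coe_mk]
        exact hA a u (b • v)
      · intro u b' b v
        simp only [TensorProduct.lift.tmul, LinearMap.mk₂_apply, LinearMap.coe_mk,
          AddHom.coe_mk, mul_smul]
        exact hB b' u (b • v)
      · intro u b b'' v
        simp [mul_smul]
      · intro u b v
        simp
    · intro g ⟨_, hg⟩
      apply TensorProduct.ext'
      intro u b
      ext v
      simp [hg]
  · rintro g ⟨hgA, hgB, hgB'⟩
    refine ⟨TensorProduct.lift (LinearMap.mk₂ K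
      (fun u v => g (u ⊗ₜ[K] (1 : B)) v)
      (by intro u₁ u₂ v; rw [TensorProduct.add_tmul, map_add, LinearMap.add_apply])
      (by intro k u v; rw [TensorProduct.smul_tmul, TensorProduct.tmul_smul, map_smul,
            LinearMap.smul_apply])
      (by intro u v₁ v₂; rw [map_add])
      (by intro k u v; rw [map_smul])),
      ?_, ?_⟩
    · refine ⟨⟨?_, ?_⟩, ?_⟩
      · intro a u v
        simp only [TensorProduct.lift.tmul, LinearMap.mk₂_apply]
        exact hgA a u 1 v
      · intro b u v
        simp only [TensorProduct.lift.tmul, LinearMap.mk₂_apply]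
        have h1 : g (u ⊗ₜ[K] (1 : B)) (b • v) = g (u ⊗ₜ[K] ((1 : B) * b)) v :=
          (hgB' u 1 b v).symm
        rw [h1, one_mul, ← mul_one b, hgB u b 1 v, mul_one]
      · intro u v
        simp
    · intro f ⟨_, hf⟩
      apply TensorProduct.ext'
      intro u v
      simp [hf]
end

section
/- Let L be a commutative ring, G a subgroup of the group of ring automorphisms of L, and σ a ring automorphism of L with σ ∘ σ = id and σ ∘ g ∘ σ ∈ G for every g ∈ G. For g ∈ G set ḡ := σ ∘ g⁻¹ ∘ σ ∈ G and σ_g := g ∘ σ. For any function c : G → Lˣ, define α_c(g,h) := c(g) · g(c(h)) · c(gh)⁻¹ and μ_c(g) := σ_{ḡ}(c(g)) · c(ḡ)⁻¹. Then: (i) α_c is a 2-cocycle, i.e. g(α_c(h,k)) · α_c(g, hk) = α_c(gh, k) · α_c(g,h) for all g, h, k ∈ G; (ii) μ_c(ḡ) · σ_g(μ_c(g)) = 1 for all g ∈ G; (iii) μ_c(h) · h̄(μ_c(g)) · α_c(h̄, ḡ) = μ_c(gh) · σ_{\overline{gh}}(α_c(g,h)) for all g, h ∈ G; (iv) the map δ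 : c ↦ (α_c, μ_c) is multiplicative: α_{c·c'} = α_c · α_{c'} and μ_{c·c'} = μ_c · μ_{c'} pointwise, for all c, c' : G → Lˣ. -/
/-- The action of a ring automorphism of `L` on the group of units `Lˣ`. -/
def unitsAct {L : Type*} [CommRing L] (e : RingAut L) : Lˣ →* Lˣ :=
  Units.map e.toRingHom.toMonoidHom

/-- For `g` in a subgroup `G` of `RingAut L` normalized by `σ`, the element
`ḡ := σ ∘ g⁻¹ ∘ σ` of `G`. -/
def barAut {L : Type*} [CommRing L] (G : Subgroup (RingAut L)) (σ : RingAut L)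
    (hG : ∀ g ∈ G, σ * g * σ ∈ G) (g : G) : G :=
  ⟨σ * (g : RingAut L)⁻¹ * σ, hG _ (G.inv_mem g.2)⟩

/-- The 2-cochain coboundary `α_c(g,h) := c(g) · g(c(h)) · c(gh)⁻¹`. -/
def alphaC {L : Type*} [CommRing L] {G : Subgroup (RingAut L)} (c : G → Lˣ) (g h : G) : Lˣ :=
  c g * unitsAct (g : RingAut L) (c h) * (c (g * h))⁻¹

/-- The 1-cochain `μ_c(g) := σ_{ḡ}(c(g)) · c(ḡ)⁻¹`, where `σ_g := g ∘ σ`. -/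
def muC {L : Type*} [CommRing L] (G : Subgroup (RingAut L)) (σ : RingAut L)
    (hG : ∀ g ∈ G, σ * g * σ ∈ G) (c : G → Lˣ) (g : G) : Lˣ :=
  unitsAct ((barAut G σ hG g : RingAut L) * σ) (c g) * (c (barAut G σ hG g))⁻¹


lemma unitsAct_mul {L : Type*} [CommRing L] (e f : RingAut L) (u : Lˣ) :
    unitsAct (e * f) u = unitsAct e (unitsAct f u) := rfl

lemma unitsAct_one {L : Type*} [CommRing L] (u : Lˣ) : unitsAct (1 : RingAut L) u = u := rfl

section
variable {L : Type*} [CommRing L] (G : Subgroup (RingAut L)) (σ : RingAut L)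
    (hG : ∀ g ∈ G, σ * g * σ ∈ G)

lemma barAut_coe (g : G) : (barAut G σ hG g : RingAut L) = σ * (g : RingAut L)⁻¹ * σ := rfl

lemma bar_bar (hσ : σ * σ = 1) (g : G) : barAut G σ hG (barAut G σ hG g) = g := by
  have hinv : σ⁻¹ = σ := inv_eq_of_mul_eq_one_right hσ
  apply Subtype.ext
  simp only [barAut_coe, mul_inv_rev, inv_inv, hinv]
  calc σ * (σ * ((g:RingAut L) * σ)) * σ = (σ * σ) * ((g:RingAut L) * (σ * σ)) := by
        simp [mul_assoc]
    _ = g := by rw [hσ]; simp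

lemma bar_mul (hσ : σ * σ = 1) (g h : G) :
    barAut G σ hG (g * h) = barAut G σ hG h * barAut G σ hG g := by
  apply Subtype.ext
  simp only [barAut_coe, Subgroup.coe_mul, mul_inv_rev]
  calc σ * ((h:RingAut L)⁻¹ * (g:RingAut L)⁻¹) * σ
      = σ * (h:RingAut L)⁻¹ * ((σ * σ) * ((g:RingAut L)⁻¹ * σ)) := by rw [hσ]; simp [mul_assoc]
    _ = _ := by simp [mul_assoc]

lemma bar_sigma (hσ : σ * σ = 1) (g : G) :
    (barAut G σ hG g : RingAut L) * σ = σ * (g : RingAut L)⁻¹ := by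
  calc (barAut G σ hG g : RingAut L) * σ = σ * (g:RingAut L)⁻¹ * (σ * σ) := by
        simp [barAut_coe, mul_assoc]
    _ = _ := by rw [hσ]; simp

end

/-- The coboundary map `δ : c ↦ (α_c, μ_c)` lands in the set `Z(G, L, σ)` parametrizing
crossed products with involution, and is a group morphism:
(i) `α_c` is a 2-cocycle; (ii) `μ_c(ḡ)·σ_g(μ_c(g)) = 1`;
(iii) `μ_c(h)·h̄(μ_c(g))·α_c(h̄,ḡ) = μ_c(gh)·σ_{\overline{gh}}(α_c(g,h))`;
(iv) `δ` is multiplicative in `c`. -/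
theorem coboundary_crossed_product_involution
    {L : Type*} [CommRing L] (G : Subgroup (RingAut L)) (σ : RingAut L)
    (hσ : σ * σ = 1) (hG : ∀ g ∈ G, σ * g * σ ∈ G) :
    (∀ (c : G → Lˣ) (g h k : G),
        unitsAct (g : RingAut L) (alphaC c h k) * alphaC c g (h * k) =
          alphaC c (g * h) k * alphaC c g h) ∧
    (∀ (c : G → Lˣ) (g : G),
        muC G σ hG c (barAut G σ hG g) *
          unitsAct ((g : RingAut L) * σ) (muC G σ hG c g) = 1) ∧
    (∀ (c : G → Lˣ) (g h : G),
        muC G σ hG c h * unitsAct ((barAut G σ hG h : RingAut L)) (muC G σ hG c g) *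
            alphaC c (barAut G σ hG h) (barAut G σ hG g) =
          muC G σ hG c (g * h) *
            unitsAct ((barAut G σ hG (g * h) : RingAut L) * σ) (alphaC c g h)) ∧
    (∀ (c c' : G → Lˣ) (g h : G),
        alphaC (fun x => c x * c' x) g h = alphaC c g h * alphaC c' g h ∧
        muC G σ hG (fun x => c x * c' x) g = muC G σ hG c g * muC G σ hG c' g) := by
  refine ⟨?_, ?_, ?_, ?_⟩
  · intro c g h k
    simp only [alphaC, map_mul, map_inv, Subgroup.coe_mul, unitsAct_mul, mul_assoc]
    simp [mul_comm, mul_left_comm, mul_assoc]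
  · intro c g
    have key : σ * ((barAut G σ hG g : RingAut L) * σ) = (g : RingAut L)⁻¹ := by
      calc σ * ((barAut G σ hG g : RingAut L) * σ) = σ * (σ * (g : RingAut L)⁻¹) := by
            rw [bar_sigma G σ hG hσ]
        _ = (σ * σ) * (g : RingAut L)⁻¹ := (mul_assoc _ _ _).symm
        _ = (g : RingAut L)⁻¹ := by rw [hσ]; simp
    simp only [muC, bar_bar G σ hG hσ, map_mul, map_inv, ← unitsAct_mul, mul_assoc, key,
      mul_inv_cancel, unitsAct_one]
    simp [mul_comm, mul_left_comm, mul_assoc]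
  · intro c g h
    have k1 : (barAut G σ hG g : RingAut L) * (σ * (g : RingAut L)) = σ := by
      calc (barAut G σ hG g : RingAut L) * (σ * (g : RingAut L))
          = ((barAut G σ hG g : RingAut L) * σ) * (g : RingAut L) := (mul_assoc _ _ _).symm
        _ = σ * ((g : RingAut L)⁻¹ * (g : RingAut L)) := by rw [bar_sigma G σ hG hσ, mul_assoc]
        _ = σ := by simp
    simp only [muC, alphaC, bar_mul G σ hG hσ, Subgroup.coe_mul, map_mul, map_inv,
      ← unitsAct_mul, mul_assoc, k1]
    simp [mul_comm, mul_left_comm, mul_assoc]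
  · intro c c' g h
    constructor <;>
    · simp only [alphaC, muC, map_mul, map_inv, mul_inv_rev]
      simp [mul_comm, mul_left_comm, mul_assoc]
end

section
/- Let R be a commutative ring equipped with a ℤ/2ℤ-grading R = R₀ ⊕ R₁, where R₀ is a subring, R₁ is an additive subgroup, R₀·R₁ ⊆ R₁, and R₁·R₁ ⊆ R₀. If f, g : R → ℤ are ring homomorphisms which agree on R₀, then there exists a sign s ∈ {1, −1} such that g(x₀ + x₁) = f(x₀) + s·f(x₁) for all x₀ ∈ R₀ and x₁ ∈ R₁. Equivalently, g = f or g = f ∘ ι, where ι : R → R is the grading involution x₀ + x₁ ↦ x₀ − x₁. In particular, a ring homomorphism R₀ → ℤ admits at most two extensions to a ring homomorphism R → ℤ. -/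
/-- Ring homomorphisms to `ℤ` from a `ℤ/2ℤ`-graded commutative ring `R = R₀ ⊕ R₁` which agree
on the even part `R₀` differ at most by a sign on the odd part `R₁`; in particular a ring
homomorphism `R₀ → ℤ` admits at most two extensions to `R`. -/
theorem graded_ringHom_extension_sign
    {R : Type*} [CommRing R] (R₀ : Subring R) (R₁ : AddSubgroup R)
    (hdecomp : ∀ x : R, ∃ x₀ ∈ R₀, ∃ x₁ ∈ R₁, x = x₀ + x₁)
    (hdisj : ∀ x : R, x ∈ R₀ → x ∈ R₁ → x = 0)
    (h01 : ∀ x ∈ R₀, ∀ y ∈ R₁, x * y ∈ R₁)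
    (h11 : ∀ x ∈ R₁, ∀ y ∈ R₁, x * y ∈ R₀) :
    (∀ f g : R →+* ℤ, (∀ x ∈ R₀, f x = g x) →
      ∃ s : ℤ, (s = 1 ∨ s = -1) ∧
        ∀ x₀ ∈ R₀, ∀ x₁ ∈ R₁, g (x₀ + x₁) = f x₀ + s * f x₁) ∧
    (∀ f g h : R →+* ℤ, (∀ x ∈ R₀, f x = g x) → (∀ x ∈ R₀, f x = h x) →
      f = g ∨ f = h ∨ g = h) := by
  -- pointwise sign on the odd part
  have key : ∀ f g : R →+* ℤ, (∀ x ∈ R₀, f x = g x) →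
      (∀ x ∈ R₁, g x = f x) ∨ (∀ x ∈ R₁, g x = -f x) := by
    intro f g hfg
    have pt : ∀ x ∈ R₁, g x = f x ∨ g x = -f x := by
      intro x hx
      have hsq : f (x * x) = g (x * x) := hfg _ (h11 x hx x hx)
      rw [map_mul, map_mul] at hsq
      have : (f x - g x) * (f x + g x) = 0 := by ring_nf; linarith
      rcases mul_eq_zero.mp this with h | h
      · left; linarith
      · right; linarith
    by_cases hex : ∃ x ∈ R₁, g x ≠ f x
    · right
      obtain ⟨x, hx, hne⟩ := hex
      have hgx : g x = -f x := (pt x hx).resolve_left hne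
      have hfx : f x ≠ 0 := by intro h0; apply hne; rw [hgx, h0]; simp
      intro y hy
      rcases pt y hy with h | h
      · -- show f y = 0
        have hmul : f (x * y) = g (x * y) := hfg _ (h11 x hx y hy)
        rw [map_mul, map_mul, hgx, h] at hmul
        have : f x * f y = 0 := by linarith
        have hy0 : f y = 0 := by
          rcases mul_eq_zero.mp this with h' | h'
          · exact absurd h' hfx
          · exact h'
        rw [h, hy0]; simp
      · exact h
    · left
      intro y hy
      by_contra hne
      exact hex ⟨y, hy, hne⟩
  constructor
  · intro f g hfg
    rcases key f g hfg with h | h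
    · refine ⟨1, Or.inl rfl, fun x₀ h₀ x₁ h₁ => ?_⟩
      rw [map_add, ← hfg x₀ h₀, h x₁ h₁]; ring
    · refine ⟨-1, Or.inr rfl, fun x₀ h₀ x₁ h₁ => ?_⟩
      rw [map_add, ← hfg x₀ h₀, h x₁ h₁]; ring
  · intro f g h hfg hfh
    have eqhom : ∀ (a b : R →+* ℤ), (∀ x ∈ R₀, a x = b x) → (∀ x ∈ R₁, b x = a x) →
        a = b := by
      intro a b h0 h1
      ext x
      obtain ⟨x₀, hx₀, x₁, hx₁, rfl⟩ := hdecomp x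
      rw [map_add, map_add, h0 x₀ hx₀, h1 x₁ hx₁]
    rcases key f g hfg with h1 | h1
    · exact Or.inl (eqhom f g hfg h1)
    rcases key f h hfh with h2 | h2
    · exact Or.inr (Or.inl (eqhom f h hfh h2))
    · refine Or.inr (Or.inr (eqhom g h (fun x hx => by rw [← hfg x hx, hfh x hx])
        (fun x hx => by rw [h1 x hx, h2 x hx])))
end

section
/- Let K be a field, V and W finite-dimensional K-vector spaces, B a nondegenerate symmetric bilinear form on V, and B' a nondegenerate symmetric bilinear form on W. Let U ⊆ V be a subspace which is a Lagrangian of B, i.e. U equals its own orthogonal complement with respect to B. Then the image of U ⊗ W in V ⊗ W is a Lagrangian of the tensor product bilinear form B ⊗ B' on V ⊗_K W, i.e. it equals its own orthogonal complement with respect to B ⊗ B'. -/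
/-!
The image `S` of `U ⊗ W` is totally isotropic, since `(B ⊗ B')(u ⊗ w, u' ⊗ w') = B u u' * B' w w'`
vanishes for `u, u' ∈ U`. As `W` is flat, `S ≅ U ⊗ W` has dimension `dim U * dim W`, which is half of
`dim (V ⊗ W)` because `U` is a Lagrangian. Finally `B ⊗ B'` is nondegenerate (its Gram matrix in a
product basis is the Kronecker product of the Gram matrices of `B` and `B'`), and for a nondegenerate
form an isotropic subspace of half the dimension equals its orthogonal.
-/

open TensorProduct Module

open LinearMap (BilinForm)

open scoped Kronecker

namespace LinearMap

namespace BilinForm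

section CommSemiring

variable {R M N : Type*} [CommSemiring R] [AddCommMonoid M] [Module R M]
  [AddCommMonoid N] [Module R N]

theorem toMatrix_tmul {ι κ : Type*} [Fintype ι] [DecidableEq ι] [Fintype κ] [DecidableEq κ]
    (b : Basis ι R M) (c : Basis κ R N) (B : BilinForm R M) (B' : BilinForm R N) :
    toMatrix (b.tensorProduct c) (B.tmul B') = toMatrix b B ⊗ₖ toMatrix c B' := by
  ext ⟨i, j⟩ ⟨k, l⟩
  simp [toMatrix_apply, Basis.tensorProduct_apply, tensorDistrib_tmul, mul_comm]

theorem range_rTensor_le_orthogonal_tmul (B : BilinForm R M) (B' : BilinForm R N)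
    {U U' : Submodule R M} (hU : U' ≤ B.orthogonal U) :
    range (U'.subtype.rTensor N) ≤ orthogonal (B.tmul B') (range (U.subtype.rTensor N)) := by
  rintro _ ⟨x', rfl⟩ _ ⟨x, rfl⟩
  suffices (B.tmul B').compl₁₂ (U.subtype.rTensor N) (U'.subtype.rTensor N) = 0 from
    congr($this x x')
  ext u w u' w'
  simp [tensorDistrib_tmul, hU u'.2 u u.2]

end CommSemiring

theorem nondegenerate_tmul {R M N : Type*} [CommRing R] [IsDomain R]
    [AddCommGroup M] [Module R M] [Free R M] [Module.Finite R M]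
    [AddCommGroup N] [Module R N] [Free R N] [Module.Finite R N]
    {B : BilinForm R M} {B' : BilinForm R N} (hB : B.Nondegenerate) (hB' : B'.Nondegenerate) :
    (B.tmul B').Nondegenerate := by
  classical
  let b := Free.chooseBasis R M
  let c := Free.chooseBasis R N
  rw [nondegenerate_iff_det_ne_zero b] at hB
  rw [nondegenerate_iff_det_ne_zero c] at hB'
  refine (nondegenerate_iff_det_ne_zero (b.tensorProduct c)).mpr ?_
  rw [toMatrix_tmul, Matrix.det_kronecker]
  exact mul_ne_zero (pow_ne_zero _ hB) (pow_ne_zero _ hB')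

theorem eq_orthogonal_iff {K V : Type*} [Field K] [AddCommGroup V] [Module K V]
    [FiniteDimensional K V] {B : BilinForm K V} (hB : B.Nondegenerate) (S : Submodule K V) :
    S = B.orthogonal S ↔ S ≤ B.orthogonal S ∧ 2 * finrank K S = finrank K V := by
  have hrank := finrank_orthogonal hB S
  have hle := S.finrank_le
  constructor
  · intro h
    refine ⟨h.le, ?_⟩
    rw [← h] at hrank
    omega
  · rintro ⟨h, hdim⟩
    exact Submodule.eq_of_le_of_finrank_le h (by omega)

end BilinForm

end LinearMap

open LinearMap.BilinForm in
theorem lagrangian_tensor_general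
    (K V W : Type*) [Field K]
    [AddCommGroup V] [Module K V] [FiniteDimensional K V]
    [AddCommGroup W] [Module K W] [FiniteDimensional K W]
    (B : LinearMap.BilinForm K V) (B' : LinearMap.BilinForm K W)
    (hBnd : B.Nondegenerate) (hB'nd : B'.Nondegenerate)
    (U : Submodule K V) (hU : U = B.orthogonal U) :
    LinearMap.range (TensorProduct.map U.subtype (LinearMap.id : W →ₗ[K] W)) =
      LinearMap.BilinForm.orthogonal
        (LinearMap.BilinForm.tmul B B' : LinearMap.BilinForm K (V ⊗[K] W))
        (LinearMap.range (TensorProduct.map U.subtype (LinearMap.id : W →ₗ[K] W))) := by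
  obtain ⟨hU_isotropic, hU_finrank⟩ := (eq_orthogonal_iff hBnd U).mp hU
  have hinj : Function.Injective (TensorProduct.map U.subtype (LinearMap.id : W →ₗ[K] W)) :=
    Module.Flat.rTensor_preserves_injective_linearMap _ U.injective_subtype
  refine (eq_orthogonal_iff (nondegenerate_tmul hBnd hB'nd) _).mpr
    ⟨range_rTensor_le_orthogonal_tmul B B' hU_isotropic, ?_⟩
  rw [LinearMap.finrank_range_of_inj hinj, finrank_tensorProduct, finrank_tensorProduct,
    ← hU_finrank, mul_assoc]

/-- If `U` is a Lagrangian of a nondegenerate symmetric bilinear form `B` on `V`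
(i.e. `U` equals its own orthogonal complement), and `B'` is a nondegenerate symmetric
bilinear form on `W`, then the image of `U ⊗ W` in `V ⊗ W` is a Lagrangian of the tensor
product form `B ⊗ B'`. -/
theorem lagrangian_tensor
    (K V W : Type*) [Field K]
    [AddCommGroup V] [Module K V] [FiniteDimensional K V]
    [AddCommGroup W] [Module K W] [FiniteDimensional K W]
    (B : LinearMap.BilinForm K V) (B' : LinearMap.BilinForm K W)
    (hBsymm : ∀ x y : V, B x y = B y x) (hBnd : B.Nondegenerate)
    (hB'symm : ∀ x y : W, B' x y = B' y x) (hB'nd : B'.Nondegenerate)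
    (U : Submodule K V) (hU : U = B.orthogonal U) :
    LinearMap.range (TensorProduct.map U.subtype (LinearMap.id : W →ₗ[K] W)) =
      LinearMap.BilinForm.orthogonal
        (LinearMap.BilinForm.tmul B B' : LinearMap.BilinForm K (V ⊗[K] W))
        (LinearMap.range (TensorProduct.map U.subtype (LinearMap.id : W →ₗ[K] W))) :=
  lagrangian_tensor_general K V W B B' hBnd hB'nd U hU
end
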